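/- Let (A_n), (B_n) be sequences of complex numbers converging to A and B respectively, and let (d_n) satisfy d_{n+1} = A_n d_n + B_n d_{n-1} for n ≥ 1, with d₁ = A₀ d₀. Then for every complex x with |A·x| + |B·x²| < 1, the series ∑_{n=0}^∞ d_n x^n converges absolutely. -/
import Mathlib


theorem stmt_4 (A B : ℂ) (An Bn : ℕ → ℂ)
    (hA : Filter.Tendsto An Filter.atTop (nhds A))
    (hB : Filter.Tendsto Bn Filter.atTop (nhds B))
    (d : ℕ → ℂ)
    (hd1 : d 1 = An 0 * d 0)
    (hrec : ∀ n : ℕ, 1 ≤ n → d (n + 1) = An n * d n + Bn n * d (n - 1))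
    (x : ℂ) (hx : ‖A * x‖ + ‖B * x ^ 2‖ < 1) :
    Summable (fun n : ℕ => ‖d n * x ^ n‖) := by
  set q := ‖A * x‖ + ‖B * x ^ 2‖ with hq
  have hq0 : 0 ≤ q := by positivity
  set r := (q + 1) / 2 with hr
  have hqr : q < r := by rw [hr]; linarith
  have hr1 : r < 1 := by rw [hr]; linarith
  have hr0 : 0 < r := by rw [hr]; linarith
  have htend : Filter.Tendsto (fun n => ‖An n * x‖ + ‖Bn n * x ^ 2‖)
      Filter.atTop (nhds q) :=
    (hA.mul_const x).norm.add (hB.mul_const (x ^ 2)).norm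
  obtain ⟨N0, hN0⟩ := Filter.eventually_atTop.mp (htend.eventually_lt_const hqr)
  set N := max N0 1 with hN
  have hN1 : 1 ≤ N := le_max_right _ _
  set t := Real.sqrt r with ht
  have ht0 : 0 < t := Real.sqrt_pos.mpr hr0
  have ht2 : t ^ 2 = r := Real.sq_sqrt hr0.le
  have ht1 : t < 1 := by nlinarith
  set u := fun n => ‖d n * x ^ n‖ with hu
  have hu0 : ∀ n, 0 ≤ u n := fun n => norm_nonneg _
  set C := max (u N) (u (N + 1) / t) with hC
  have hC0 : 0 ≤ C := le_trans (hu0 N) (le_max_left _ _)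
  -- key recurrence bound
  have key : ∀ n, N ≤ n → u (n + 1) ≤ r * max (u n) (u (n - 1)) := by
    intro n hn
    have hn1 : 1 ≤ n := le_trans hN1 hn
    obtain ⟨m, rfl⟩ := Nat.exists_eq_add_of_le hn1
    have hrn : d (1 + m + 1) = An (1 + m) * d (1 + m) + Bn (1 + m) * d (1 + m - 1) :=
      hrec (1 + m) (by omega)
    have hsimp : 1 + m - 1 = m := by omega
    rw [hsimp] at hrn
    have e1 : u (1 + m + 1) = ‖(An (1 + m) * d (1 + m) + Bn (1 + m) * d m) * x ^ (1 + m + 1)‖ := by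
      rw [hu]; simp only []; rw [hrn]
    have e2 : (An (1 + m) * d (1 + m) + Bn (1 + m) * d m) * x ^ (1 + m + 1)
        = (An (1 + m) * x) * (d (1 + m) * x ^ (1 + m))
          + (Bn (1 + m) * x ^ 2) * (d m * x ^ m) := by
      ring
    have hb : ‖An (1 + m) * x‖ + ‖Bn (1 + m) * x ^ 2‖ ≤ r :=
      (hN0 (1 + m) (le_trans (le_max_left _ _) hn)).le
    have hmax1 : u (1 + m) ≤ max (u (1 + m)) (u (1 + m - 1)) := le_max_left _ _
    have hmax2 : u m ≤ max (u (1 + m)) (u (1 + m - 1)) := by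
      rw [hsimp]; exact le_max_right _ _
    calc u (1 + m + 1) = ‖(An (1 + m) * x) * (d (1 + m) * x ^ (1 + m))
          + (Bn (1 + m) * x ^ 2) * (d m * x ^ m)‖ := by rw [e1, e2]
      _ ≤ ‖(An (1 + m) * x) * (d (1 + m) * x ^ (1 + m))‖
          + ‖(Bn (1 + m) * x ^ 2) * (d m * x ^ m)‖ := norm_add_le _ _
      _ = ‖An (1 + m) * x‖ * u (1 + m) + ‖Bn (1 + m) * x ^ 2‖ * u m := by
          rw [norm_mul (An (1 + m) * x), norm_mul (Bn (1 + m) * x ^ 2)]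
      _ ≤ ‖An (1 + m) * x‖ * max (u (1 + m)) (u (1 + m - 1))
          + ‖Bn (1 + m) * x ^ 2‖ * max (u (1 + m)) (u (1 + m - 1)) :=
          add_le_add (mul_le_mul_of_nonneg_left hmax1 (norm_nonneg _))
            (mul_le_mul_of_nonneg_left hmax2 (norm_nonneg _))
      _ = (‖An (1 + m) * x‖ + ‖Bn (1 + m) * x ^ 2‖) * max (u (1 + m)) (u (1 + m - 1)) := by
          ring
      _ ≤ r * max (u (1 + m)) (u (1 + m - 1)) :=
          mul_le_mul_of_nonneg_right hb (le_max_of_le_left (hu0 _))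
  -- geometric decay
  have main : ∀ k, u (N + k) ≤ C * t ^ k ∧ u (N + k + 1) ≤ C * t ^ (k + 1) := by
    intro k
    induction k with
    | zero =>
      constructor
      · show u N ≤ C * t ^ 0
        rw [pow_zero, mul_one]
        exact le_max_left _ _
      · have h1 : u (N + 1) / t ≤ C := le_max_right _ _
        have h2 := (div_le_iff₀ ht0).mp h1
        show u (N + 1) ≤ C * t ^ 1
        rw [pow_one]
        linarith [h2]
    | succ k ih =>
      refine ⟨ih.2, ?_⟩
      have hkey := key (N + k + 1) (by omega)
      have hsimp : N + k + 1 - 1 = N + k := by omega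
      rw [hsimp] at hkey
      have hmax : max (u (N + k + 1)) (u (N + k)) ≤ C * t ^ k := by
        apply max_le
        · calc u (N + k + 1) ≤ C * t ^ (k + 1) := ih.2
            _ ≤ C * t ^ k := by
              apply mul_le_mul_of_nonneg_left _ hC0
              exact pow_le_pow_of_le_one ht0.le ht1.le (by omega)
        · exact ih.1
      calc u (N + (k + 1) + 1) = u (N + k + 1 + 1) := by ring_nf
        _ ≤ r * max (u (N + k + 1)) (u (N + k)) := hkey
        _ ≤ r * (C * t ^ k) := by gcongr
        _ = C * t ^ (k + 1 + 1) := by rw [← ht2]; ring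
  -- conclude summability
  rw [← summable_nat_add_iff N]
  apply Summable.of_nonneg_of_le (fun n => hu0 _) (fun n => ?_)
    ((summable_geometric_of_lt_one ht0.le ht1).mul_left C)
  calc u (n + N) = u (N + n) := by rw [Nat.add_comm]
    _ ≤ C * t ^ n := (main n).1
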